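/- Let p_1 ≥ p_2 ≥ ... ≥ p_n be a sorted probability distribution with entropy H = Σ_i p_i log(1/p_i), and suppose that for some z ∈ {1,...,n} and γ ∈ (0,1) we have Σ_{i=1}^{z} p_i < γ. Then H ≥ (1-γ) · log(z/γ), i.e., z < γ · e^{H/(1-γ)}. -/

import Mathlib

/-! Every probability beyond the first `z` is at most `p_z ≤ γ / z`, so each of them contributes
at least `p_i log (z / γ)` to the entropy, and together they carry mass more than `1 - γ`. -/

open Finset Real

lemma mul_log_inv_le_negMulLog {x c : ℝ} (hx : 0 ≤ x) (hxc : x ≤ c) :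
    x * log c⁻¹ ≤ negMulLog x := by
  rcases hx.eq_or_lt with rfl | hx
  · simp
  rw [negMulLog, log_inv, neg_mul, mul_neg, neg_le_neg_iff]
  exact mul_le_mul_of_nonneg_left (log_le_log hx hxc) hx.le

lemma sum_mul_log_inv_le_sum_negMulLog {ι : Type*} [Fintype ι] {p : ι → ℝ} {c : ℝ}
    (t : Finset ι) (hnn : ∀ i, 0 ≤ p i) (hle : ∀ i, p i ≤ 1) (hc : ∀ i ∈ t, p i ≤ c) :
    (∑ i ∈ t, p i) * log c⁻¹ ≤ ∑ i, negMulLog (p i) :=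
  calc (∑ i ∈ t, p i) * log c⁻¹
      ≤ ∑ i ∈ t, negMulLog (p i) := by
        rw [sum_mul]
        exact sum_le_sum fun i hi => mul_log_inv_le_negMulLog (hnn i) (hc i hi)
    _ ≤ ∑ i, negMulLog (p i) :=
        sum_le_sum_of_subset_of_nonneg (subset_univ t) fun i _ _ =>
          negMulLog_nonneg (hnn i) (hle i)

lemma Antitone.natCast_mul_le_sum_filter_val_lt {n z : ℕ} {p : Fin n → ℝ} (hp : Antitone p)
    {i : Fin n} (hi : z ≤ i) :
    z * p i ≤ ∑ j ∈ univ.filter (fun j : Fin n => (j : ℕ) < z), p j := by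
  have hcard : #{j : Fin n | (j : ℕ) < z} = z := by
    rw [Fin.card_filter_val_lt]; omega
  calc (z : ℝ) * p i = ∑ _j ∈ univ.filter (fun j : Fin n => (j : ℕ) < z), p i := by
        rw [sum_const, hcard, nsmul_eq_mul]
    _ ≤ _ := sum_le_sum fun j hj => hp (Fin.le_def.2 (by rw [mem_filter] at hj; omega))

theorem entropy_lower_bound_of_spread_general (n : ℕ) (p : Fin n → ℝ) (hsort : Antitone p)
    (hnn : ∀ i, 0 ≤ p i) (hsum : ∑ i, p i = 1)
    (γ : ℝ) (hγ : γ ∈ Set.Ioo (0 : ℝ) 1)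
    (z : ℕ) (hz1 : 1 ≤ z)
    (hlt : ∑ i ∈ Finset.univ.filter (fun i : Fin n => (i : ℕ) < z), p i < γ) :
    (1 - γ) * Real.log ((z : ℝ) / γ) ≤ ∑ i, Real.negMulLog (p i) ∧
      (z : ℝ) < γ * Real.exp ((∑ i, Real.negMulLog (p i)) / (1 - γ)) := by
  obtain ⟨hγ0, hγ1⟩ := hγ
  have hz : (1 : ℝ) ≤ z := by exact_mod_cast hz1
  set tail := univ.filter (fun i : Fin n => ¬ (i : ℕ) < z)
  have htail : ∀ i ∈ tail, p i ≤ γ / z := fun i hi => by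
    rw [le_div_iff₀ (by positivity), mul_comm]
    exact (hsort.natCast_mul_le_sum_filter_val_lt (by simpa [tail] using hi)).trans hlt.le
  have hmass : 1 - γ < ∑ i ∈ tail, p i := by
    linarith [sum_filter_add_sum_filter_not univ (fun i : Fin n => (i : ℕ) < z) p]
  have hle : ∀ i, p i ≤ 1 := fun i =>
    hsum ▸ single_le_sum (fun j _ => hnn j) (mem_univ i)
  have hlog : 0 < log (z / γ) := log_pos ((one_lt_div hγ0).2 (by linarith))
  have hH : (1 - γ) * log (z / γ) < ∑ i, negMulLog (p i) :=
    calc (1 - γ) * log (z / γ) < (∑ i ∈ tail, p i) * log (γ / z)⁻¹ := by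
          rw [inv_div]; exact mul_lt_mul_of_pos_right hmass hlog
      _ ≤ _ := sum_mul_log_inv_le_sum_negMulLog tail hnn hle htail
  refine ⟨hH.le, ?_⟩
  have hexp : z / γ < exp ((∑ i, negMulLog (p i)) / (1 - γ)) := by
    rw [← log_lt_iff_lt_exp (by positivity), lt_div_iff₀ (by linarith), mul_comm]
    exact hH
  rwa [div_lt_iff₀ hγ0, mul_comm] at hexp

/-- If the top-`z` mass of a sorted distribution is `< γ`, then the entropy is at
least `(1-γ)·log(z/γ)`, equivalently `z < γ·e^{H/(1-γ)}`. -/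
theorem entropy_lower_bound_of_spread (n : ℕ) (p : Fin n → ℝ) (hsort : Antitone p)
    (hnn : ∀ i, 0 ≤ p i) (hsum : ∑ i, p i = 1)
    (γ : ℝ) (hγ : γ ∈ Set.Ioo (0 : ℝ) 1)
    (z : ℕ) (hz1 : 1 ≤ z) (hzn : z ≤ n)
    (hlt : ∑ i ∈ Finset.univ.filter (fun i : Fin n => (i : ℕ) < z), p i < γ) :
    (1 - γ) * Real.log ((z : ℝ) / γ) ≤ ∑ i, Real.negMulLog (p i) ∧
      (z : ℝ) < γ * Real.exp ((∑ i, Real.negMulLog (p i)) / (1 - γ)) :=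
  entropy_lower_bound_of_spread_general n p hsort hnn hsum γ hγ z hz1 hlt
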